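/- Let p_v ≥ 1, p_c ≥ 1, d > 0, R ≥ 0 be real numbers with p_c/(1+p_v·p_c) < R/d < 1/p_v. Then the set of Nash equilibria of the two-miner mining game is exactly { (1,1), (0,0), (g1(R/d), g2(R/d)) }: the two pure equilibria in which both miners do not participate and in which both miners participate, together with the mixed equilibrium in which miner 1 does not participate with probability g1(R/d) and miner 2 does not participate with probability g2(R/d). -/

import Mathlib

/-!
Each payoff is `(1 - x)` (the probability of participating) times an incentive that is affine
and strictly decreasing in the opponent's abstention probability and vanishes exactly at the
threshold `g2 (R / d)` for miner 1, resp. `g1 (R / d)` for miner 2; the reward bounds place both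
thresholds in `(0, 1)`. A best response is therefore to participate below the threshold, to
abstain above it, and anything at it, so the mutual best responses are `(0, 0)`, `(1, 1)` and the
pair of thresholds.
-/

/-- Expected payoff of miner 1; `x1`, `x2` are the probabilities that
miners 1 and 2 do NOT participate in mining. -/
noncomputable def u1 (pv pc d R x1 x2 : ℝ) : ℝ :=
  (1 - x1) * (x2 * (R - d) +
    (1 - x2) * (1 / (1 + pv * pc)) * (R - d / (1 + pv * pc)))

/-- Expected payoff of miner 2. -/
noncomputable def u2 (pv pc d R x1 x2 : ℝ) : ℝ :=
  (1 - x2) * (x1 * (R - d / pv) +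
    (1 - x1) * (pv * pc / (1 + pv * pc)) * (R - d * pc / (1 + pv * pc)))

/-- `p = (x1, x2) ∈ [0,1]²` is a (mixed) Nash equilibrium of the
two-miner mining game. -/
def IsNashEq (pv pc d R : ℝ) (p : ℝ × ℝ) : Prop :=
  p.1 ∈ Set.Icc (0 : ℝ) 1 ∧ p.2 ∈ Set.Icc (0 : ℝ) 1 ∧
  (∀ y ∈ Set.Icc (0 : ℝ) 1, u1 pv pc d R p.1 p.2 ≥ u1 pv pc d R y p.2) ∧
  (∀ y ∈ Set.Icc (0 : ℝ) 1, u2 pv pc d R p.1 p.2 ≥ u2 pv pc d R p.1 y)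

/-- The threshold function `g1`. -/
noncomputable def g1 (pv pc z : ℝ) : ℝ :=
  pv * pc * (z - pc / (1 + pv * pc)) / ((2 * pv * pc + 1) / (pv * (1 + pv * pc)) - z)

/-- The threshold function `g2`. -/
noncomputable def g2 (pv pc z : ℝ) : ℝ :=
  (z - 1 / (1 + pv * pc)) / (pv * pc * ((2 + pv * pc) / (1 + pv * pc) - z))

open Set

lemma forall_one_sub_mul_le_iff {c x : ℝ} (hx : x ∈ Icc (0 : ℝ) 1) :
    (∀ y ∈ Icc (0 : ℝ) 1, (1 - x) * c ≥ (1 - y) * c) ↔ (0 < c → x = 0) ∧ (c < 0 → x = 1) := by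
  obtain ⟨hx₀, hx₁⟩ := hx
  constructor
  · intro h
    refine ⟨fun hc => ?_, fun hc => ?_⟩
    · have := h 0 (left_mem_Icc.2 zero_le_one)
      nlinarith
    · have := h 1 (right_mem_Icc.2 zero_le_one)
      nlinarith
  · rintro ⟨hpos, hneg⟩ y ⟨hy₀, hy₁⟩
    rcases lt_trichotomy c 0 with hc | rfl | hc
    · rw [hneg hc]; nlinarith
    · simp
    · rw [hpos hc]; nlinarith

lemma forall_one_sub_mul_mul_sub_le_iff {m g x x' : ℝ} (hm : 0 < m) (hx : x ∈ Icc (0 : ℝ) 1) :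
    (∀ y ∈ Icc (0 : ℝ) 1, (1 - x) * (m * (g - x')) ≥ (1 - y) * (m * (g - x'))) ↔
      (x' < g → x = 0) ∧ (g < x' → x = 1) := by
  have hpos : 0 < m * (g - x') ↔ x' < g := by rw [mul_pos_iff_of_pos_left hm, sub_pos]
  have hneg : m * (g - x') < 0 ↔ g < x' := by
    rw [← neg_pos, ← mul_neg, mul_pos_iff_of_pos_left hm, neg_sub, sub_pos]
  rw [forall_one_sub_mul_le_iff hx, hpos, hneg]

lemma mutual_best_responses_iff {a b x₁ x₂ : ℝ} (ha : a ∈ Ioo (0 : ℝ) 1)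
    (hb : b ∈ Ioo (0 : ℝ) 1) :
    (x₁ ∈ Icc (0 : ℝ) 1 ∧ x₂ ∈ Icc (0 : ℝ) 1 ∧
        ((x₂ < b → x₁ = 0) ∧ (b < x₂ → x₁ = 1)) ∧ ((x₁ < a → x₂ = 0) ∧ (a < x₁ → x₂ = 1))) ↔
      (x₁, x₂) ∈ ({(1, 1), (0, 0), (a, b)} : Set (ℝ × ℝ)) := by
  obtain ⟨ha₀, ha₁⟩ := ha
  obtain ⟨hb₀, hb₁⟩ := hb
  constructor
  · rintro ⟨-, -, ⟨hlow₁, hhigh₁⟩, hlow₂, hhigh₂⟩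
    rcases lt_trichotomy x₂ b with h | rfl | h
    · obtain rfl := hlow₁ h
      rw [hlow₂ ha₀]
      exact Or.inr (Or.inl rfl)
    · rcases lt_trichotomy x₁ a with h | rfl | h
      · exact absurd (hlow₂ h) hb₀.ne'
      · exact Or.inr (Or.inr rfl)
      · exact absurd (hhigh₂ h) hb₁.ne
    · obtain rfl := hhigh₁ h
      rw [hhigh₂ ha₁]
      exact Or.inl rfl
  · simp only [mem_insert_iff, mem_singleton_iff, Prod.mk.injEq]
    rintro (⟨rfl, rfl⟩ | ⟨rfl, rfl⟩ | ⟨rfl, rfl⟩) <;>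
      refine ⟨⟨?_, ?_⟩, ⟨?_, ?_⟩, ⟨?_, ?_⟩, ?_, ?_⟩ <;> intros <;> linarith

theorem setOf_isNashEq_eq_of_linear_incentives {pv pc d R a b m₁ m₂ : ℝ} (hm₁ : 0 < m₁)
    (hm₂ : 0 < m₂) (ha : a ∈ Ioo (0 : ℝ) 1) (hb : b ∈ Ioo (0 : ℝ) 1)
    (hu₁ : ∀ y x₂, u1 pv pc d R y x₂ = (1 - y) * (m₂ * (b - x₂)))
    (hu₂ : ∀ x₁ y, u2 pv pc d R x₁ y = (1 - y) * (m₁ * (a - x₁))) :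
    {p : ℝ × ℝ | IsNashEq pv pc d R p} = {(1, 1), (0, 0), (a, b)} := by
  ext ⟨x₁, x₂⟩
  rw [mem_ofPred_eq, IsNashEq, ← mutual_best_responses_iff ha hb]
  simp only [hu₁, hu₂]
  refine and_congr_right fun hx₁ => and_congr_right fun hx₂ => ?_
  rw [forall_one_sub_mul_mul_sub_le_iff hm₂ hx₁, forall_one_sub_mul_mul_sub_le_iff hm₁ hx₂]

lemma u1_eq_mul_sub_g2 (pv pc d R y x₂ : ℝ) (hd : d ≠ 0) (hs : 1 + pv * pc ≠ 0)
    (hD : pv * pc * ((2 + pv * pc) / (1 + pv * pc) - R / d) ≠ 0) :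
    u1 pv pc d R y x₂ = (1 - y) * (d / (1 + pv * pc) *
      (pv * pc * ((2 + pv * pc) / (1 + pv * pc) - R / d)) * (g2 pv pc (R / d) - x₂)) := by
  rw [mul_sub, mul_assoc (d / _) _ (g2 _ _ _), g2, mul_div_cancel₀ _ hD, u1]
  field_simp
  ring

lemma u2_eq_mul_sub_g1 (pv pc d R x₁ y : ℝ) (hd : d ≠ 0) (hpv : pv ≠ 0) (hs : 1 + pv * pc ≠ 0)
    (hD : (2 * pv * pc + 1) / (pv * (1 + pv * pc)) - R / d ≠ 0) :
    u2 pv pc d R x₁ y = (1 - y) * (d / (1 + pv * pc) *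
      ((2 * pv * pc + 1) / (pv * (1 + pv * pc)) - R / d) * (g1 pv pc (R / d) - x₁)) := by
  rw [mul_sub, mul_assoc (d / _) _ (g1 _ _ _), g1, mul_div_cancel₀ _ hD, u2]
  field_simp
  ring

section Thresholds

variable {pv pc z : ℝ} (hpv : 0 < pv) (hpc : 0 < pc)
include hpv hpc

lemma g1_denom_pos (hz : z < 1 / pv) : 0 < (2 * pv * pc + 1) / (pv * (1 + pv * pc)) - z := by
  have : 1 / pv ≤ (2 * pv * pc + 1) / (pv * (1 + pv * pc)) := by
    rw [div_le_div_iff₀ hpv (by positivity)]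
    nlinarith [mul_pos hpv hpc]
  linarith

lemma g2_denom_pos (hz : z < 1) : 0 < pv * pc * ((2 + pv * pc) / (1 + pv * pc) - z) := by
  have : 1 ≤ (2 + pv * pc) / (1 + pv * pc) := by
    rw [one_le_div (by positivity)]
    linarith
  have := mul_pos hpv hpc
  nlinarith

lemma g1_mem_Ioo (hz₀ : pc / (1 + pv * pc) < z) (hz₁ : z < 1 / pv) : g1 pv pc z ∈ Ioo 0 1 := by
  have hD := g1_denom_pos hpv hpc hz₁
  refine ⟨div_pos (mul_pos (mul_pos hpv hpc) (sub_pos.2 hz₀)) hD, ?_⟩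
  rw [g1, div_lt_one hD, ← sub_pos]
  have key : (2 * pv * pc + 1) / (pv * (1 + pv * pc)) - z - pv * pc * (z - pc / (1 + pv * pc))
      = (1 + pv * pc) * (1 / pv - z) := by
    field_simp
    ring
  rw [key]
  exact mul_pos (by positivity) (sub_pos.2 hz₁)

lemma g2_mem_Ioo (hz₀ : 1 / (1 + pv * pc) < z) (hz₁ : z < 1) : g2 pv pc z ∈ Ioo 0 1 := by
  have hD := g2_denom_pos hpv hpc hz₁
  refine ⟨div_pos (sub_pos.2 hz₀) hD, ?_⟩
  rw [g2, div_lt_one hD, ← sub_pos]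
  have key : pv * pc * ((2 + pv * pc) / (1 + pv * pc) - z) - (z - 1 / (1 + pv * pc))
      = (1 + pv * pc) * (1 - z) := by
    field_simp
    ring
  rw [key]
  exact mul_pos (by positivity) (sub_pos.2 hz₁)

end Thresholds

theorem nash_eq_case_middle_reward_general
    (pv pc d R : ℝ) (hpv : 1 ≤ pv) (hpc : 1 ≤ pc) (hd : 0 < d)
    (h1 : pc / (1 + pv * pc) < R / d) (h2 : R / d < 1 / pv) :
    {p : ℝ × ℝ | IsNashEq pv pc d R p}
      = {((1 : ℝ), (1 : ℝ)), ((0 : ℝ), (0 : ℝ)),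
          (g1 pv pc (R / d), g2 pv pc (R / d))} := by
  have hpv₀ : 0 < pv := one_pos.trans_le hpv
  have hpc₀ : 0 < pc := one_pos.trans_le hpc
  have hs : 0 < 1 + pv * pc := by positivity
  have hz₀ : 1 / (1 + pv * pc) < R / d := (div_le_div_of_nonneg_right hpc hs.le).trans_lt h1
  have hz₁ : R / d < 1 := h2.trans_le (div_le_one_of_le₀ hpv hpv₀.le)
  have hD₁ := g1_denom_pos hpv₀ hpc₀ h2
  have hD₂ := g2_denom_pos hpv₀ hpc₀ hz₁
  exact setOf_isNashEq_eq_of_linear_incentives (mul_pos (div_pos hd hs) hD₁)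
    (mul_pos (div_pos hd hs) hD₂) (g1_mem_Ioo hpv₀ hpc₀ h1 h2) (g2_mem_Ioo hpv₀ hpc₀ hz₀ hz₁)
    (u1_eq_mul_sub_g2 pv pc d R · · hd.ne' hs.ne' hD₂.ne')
    (u2_eq_mul_sub_g1 pv pc d R · · hd.ne' hpv₀.ne' hs.ne' hD₁.ne')

/-- If `pc/(1 + pv pc) < R/d < 1/pv` (with `pv ≥ 1`, `pc ≥ 1`), the Nash
equilibria are exactly `(1,1)`, `(0,0)` and the mixed one
`(g1(R/d), g2(R/d))`. -/
theorem nash_eq_case_middle_reward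
    (pv pc d R : ℝ) (hpv : 1 ≤ pv) (hpc : 1 ≤ pc) (hd : 0 < d) (hR : 0 ≤ R)
    (h1 : pc / (1 + pv * pc) < R / d) (h2 : R / d < 1 / pv) :
    {p : ℝ × ℝ | IsNashEq pv pc d R p}
      = {((1 : ℝ), (1 : ℝ)), ((0 : ℝ), (0 : ℝ)),
          (g1 pv pc (R / d), g2 pv pc (R / d))} :=
  nash_eq_case_middle_reward_general pv pc d R hpv hpc hd h1 h2
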